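/- arXiv:2003.09672 — 3 statements merged into one kernel-verified Lean document; each statement's English description precedes it below -/
import Mathlib

section
/- Let G be a finite abelian group. Then: (i) for every 𝕋-valued 2-cocycle ψ on G, the map β^ψ(g,h) := ψ(g,h)·conj(ψ(h,g)) is an alternating pairing on G; (ii) every alternating pairing γ on G is of the form γ = β^ψ for some 2-cocycle ψ on G; (iii) two 2-cocycles ψ, ψ' on G satisfy β^ψ = β^{ψ'} if and only if ψ and ψ' are cohomologous. In other words, [ψ] ↦ β^ψ is a group isomorphism from H²(G;𝕋) onto the group of alternating pairings on G. -/
open ComplexConjugate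

/-- `ψ` is a `𝕋`-valued 2-cocycle on the (additive) abelian group `G`. -/
def IsCocycle {G : Type*} [AddCommGroup G] (ψ : G → G → ℂ) : Prop :=
  (∀ g h, ‖ψ g h‖ = 1) ∧
    ∀ g h k, ψ g h * ψ (g + h) k = ψ h k * ψ g (h + k)

/-- `ψ` is a coboundary. -/
def IsCoboundary {G : Type*} [AddCommGroup G] (ψ : G → G → ℂ) : Prop :=
  ∃ f : G → ℂ, (∀ g, ‖f g‖ = 1) ∧
    ∀ g h, ψ g h = f g * f h * conj (f (g + h))

/-- Two 2-cocycles are cohomologous if their pointwise quotient is a coboundary. -/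
def Cohomologous {G : Type*} [AddCommGroup G] (ψ ψ' : G → G → ℂ) : Prop :=
  IsCoboundary fun g h => ψ g h / ψ' g h

/-- A `𝕋`-valued pairing on `G`: multiplicative in each argument. -/
def IsPairing {G : Type*} [AddCommGroup G] (γ : G → G → ℂ) : Prop :=
  (∀ g h, ‖γ g h‖ = 1) ∧
    (∀ g g' h, γ (g + g') h = γ g h * γ g' h) ∧
    (∀ g h h', γ g (h + h') = γ g h * γ g h')

/-- An alternating pairing: a pairing with `γ(g,g) = 1` for all `g`. -/
def IsAlternatingPairing {G : Type*} [AddCommGroup G] (γ : G → G → ℂ) : Prop :=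
  IsPairing γ ∧ ∀ g, γ g g = 1

/-- `β^ψ(g,h) = ψ(g,h) · conj (ψ(h,g))`. -/
noncomputable def beta {G : Type*} [AddCommGroup G] (ψ : G → G → ℂ) (g h : G) : ℂ :=
  ψ g h * conj (ψ h g)

/-!
By the cocycle identity the commutator form `β^ψ` is bimultiplicative, and `β^ψ = β^ψ'` exactly
when the cocycle `ψ / ψ'` is symmetric. A symmetric cocycle `ρ` defines an abelian extension of `G`
by `𝕋`; since `𝕋` is divisible, hence an injective `ℤ`-module, this extension splits, and the
splitting exhibits `ρ` as a coboundary. Conversely, write `G ≅ ∏ ℤ/nᵢ` with generators `eᵢ`. An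
alternating pairing `γ` is trivial on each cyclic factor, so it is the commutator form of its
strictly upper triangular part `ψ(g, h) = ∏_{i<j} γ(gᵢeᵢ, hⱼeⱼ)`, which is bimultiplicative and hence
a cocycle.
-/

section Extension
variable {A G : Type*} [AddCommGroup A] [AddCommGroup G]

def IsAddCocycle (ρ : G → G → A) : Prop :=
  ∀ g h k, ρ g h + ρ (g + h) k = ρ h k + ρ g (h + k)

lemma IsAddCocycle.zero_left {ρ : G → G → A} (hρ : IsAddCocycle ρ) (g : G) : ρ 0 g = ρ 0 0 := by
  simpa using (hρ 0 0 g).symm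

def TwistedProd (_ρ : G → G → A) : Type _ := A × G

namespace TwistedProd
variable {ρ : G → G → A}

instance : Add (TwistedProd ρ) := ⟨fun x y => (x.1 + y.1 + ρ x.2 y.2, x.2 + y.2)⟩
instance : Zero (TwistedProd ρ) := ⟨(-ρ 0 0, 0)⟩
instance : Neg (TwistedProd ρ) := ⟨fun x => (-x.1 - ρ (-x.2) x.2 - ρ 0 0, -x.2)⟩

abbrev addCommGroup (hρ : IsAddCocycle ρ) (hsymm : ∀ g h, ρ g h = ρ h g) :
    AddCommGroup (TwistedProd ρ) :=
  { AddGroup.ofLeftAxioms (G := TwistedProd ρ)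
      (fun x y z => Prod.ext (by
        change x.1 + y.1 + ρ x.2 y.2 + z.1 + ρ (x.2 + y.2) z.2 =
          x.1 + (y.1 + z.1 + ρ y.2 z.2) + ρ x.2 (y.2 + z.2)
        calc _ = x.1 + y.1 + z.1 + (ρ x.2 y.2 + ρ (x.2 + y.2) z.2) := by abel
          _ = _ := by rw [hρ]; abel) (add_assoc x.2 y.2 z.2))
      (fun x => Prod.ext (by
        change -ρ 0 0 + x.1 + ρ 0 x.2 = x.1
        rw [hρ.zero_left x.2]; abel) (zero_add x.2))
      (fun x => Prod.ext (by
        change -x.1 - ρ (-x.2) x.2 - ρ 0 0 + x.1 + ρ (-x.2) x.2 = -ρ 0 0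
        abel) (neg_add_cancel x.2)) with
    add_comm := fun x y => Prod.ext (by
      change x.1 + y.1 + ρ x.2 y.2 = y.1 + x.1 + ρ y.2 x.2
      rw [hsymm]; abel) (add_comm x.2 y.2) }

end TwistedProd

theorem IsAddCocycle.exists_eq_add_sub_of_symm [DivisibleBy A ℤ] {ρ : G → G → A}
    (hρ : IsAddCocycle ρ) (hsymm : ∀ g h, ρ g h = ρ h g) :
    ∃ f : G → A, ∀ g h, ρ g h = f g + f h - f (g + h) := by
  let _ := TwistedProd.addCommGroup hρ hsymm
  let ι : A →+ TwistedProd ρ :=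
    { toFun a := ((a - ρ 0 0, 0) : A × G)
      map_zero' := Prod.ext (zero_sub (ρ 0 0)) rfl
      map_add' a b := Prod.ext (show a + b - ρ 0 0 = a - ρ 0 0 + (b - ρ 0 0) + ρ 0 0 by abel)
        (add_zero (0 : G)).symm }
  have hι : Function.Injective ι := fun a b h =>
    sub_left_injective (congrArg Prod.fst h : a - ρ 0 0 = b - ρ 0 0)
  obtain ⟨r, hr⟩ := (Module.Baer.of_divisible A).extension_property_addMonoidHom ι hι (.id A)
  let s : G → TwistedProd ρ := fun g => (0, g)
  refine ⟨fun g => r (s g), fun g h => ?_⟩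
  have hsplit : s g + s h = ι (ρ g h) + s (g + h) :=
    Prod.ext (show 0 + 0 + ρ g h = ρ g h - ρ 0 0 + 0 + ρ 0 (g + h) by
      rw [hρ.zero_left (g + h)]; abel) (zero_add (g + h)).symm
  have := congrArg r hsplit
  rw [map_add, map_add, ← AddMonoidHom.comp_apply r ι, hr, AddMonoidHom.id_apply] at this
  rw [this]; abel

end Extension

noncomputable instance : DivisibleBy (Additive Circle) ℤ :=
  Circle.exp_surjective.divisibleBy Circle.expHom fun x n => map_zsmul Circle.expHom n x

section Cocycle
variable {G : Type*} [AddCommGroup G] {ψ ψ' ρ : G → G → ℂ}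

lemma IsCocycle.ne_zero (hψ : IsCocycle ψ) (g h : G) : ψ g h ≠ 0 :=
  norm_ne_zero_iff.mp (by simp [hψ.1 g h])

lemma IsCocycle.beta_eq (hψ : IsCocycle ψ) (g h : G) : beta ψ g h = ψ g h / ψ h g := by
  rw [beta, ← Complex.inv_eq_conj (hψ.1 h g), div_eq_mul_inv]

lemma IsCocycle.beta_swap (hψ : IsCocycle ψ) (g h : G) : beta ψ h g = (beta ψ g h)⁻¹ := by
  rw [hψ.beta_eq, hψ.beta_eq, inv_div]

lemma IsCocycle.beta_add_right (hψ : IsCocycle ψ) (g h k : G) :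
    beta ψ g (h + k) = beta ψ g h * beta ψ g k := by
  have hne := hψ.ne_zero
  have e₁ : ψ g (h + k) = ψ g h * ψ (g + h) k / ψ h k := by
    rw [eq_div_iff (hne h k), mul_comm, ← hψ.2]
  have e₂ : ψ (h + k) g = ψ k g * ψ h (g + k) / ψ h k := by
    rw [eq_div_iff (hne h k), mul_comm, hψ.2, add_comm k g]
  have e₃ : ψ h (g + k) = ψ h g * ψ (g + h) k / ψ g k := by
    rw [eq_div_iff (hne g k), mul_comm, ← hψ.2, add_comm h g]
  simp only [hψ.beta_eq, e₁, e₂, e₃]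
  field_simp [hne]

theorem IsCocycle.isAlternatingPairing_beta (hψ : IsCocycle ψ) :
    IsAlternatingPairing (beta ψ) := by
  refine ⟨⟨fun g h => by simp [beta, hψ.1], fun g g' h => ?_, hψ.beta_add_right⟩,
    fun g => by rw [hψ.beta_eq, div_self (hψ.ne_zero g g)]⟩
  rw [hψ.beta_swap, hψ.beta_add_right, mul_inv, ← hψ.beta_swap, ← hψ.beta_swap]

lemma IsCocycle.div (hψ : IsCocycle ψ) (hψ' : IsCocycle ψ') :
    IsCocycle fun g h => ψ g h / ψ' g h := by
  refine ⟨fun g h => by simp [hψ.1, hψ'.1], fun g h k => ?_⟩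
  rw [div_mul_div_comm, div_mul_div_comm, hψ.2, hψ'.2]

lemma IsCoboundary.symm (hρ : IsCoboundary ρ) (g h : G) : ρ g h = ρ h g := by
  obtain ⟨f, -, hf⟩ := hρ
  rw [hf, hf, mul_comm (f g), add_comm]

lemma IsCocycle.beta_eq_beta_iff (hψ : IsCocycle ψ) (hψ' : IsCocycle ψ') :
    beta ψ = beta ψ' ↔ ∀ g h, ψ g h / ψ' g h = ψ h g / ψ' h g := by
  simp only [funext_iff, hψ.beta_eq, hψ'.beta_eq]
  refine forall₂_congr fun g h => ?_
  rw [div_eq_div_iff (hψ.ne_zero h g) (hψ'.ne_zero h g),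
    div_eq_div_iff (hψ'.ne_zero g h) (hψ'.ne_zero h g), mul_comm (ψ h g)]

theorem IsCocycle.isCoboundary_of_symm (hρ : IsCocycle ρ) (hsymm : ∀ g h, ρ g h = ρ h g) :
    IsCoboundary ρ := by
  let σ : G → G → Additive Circle := fun g h =>
    .ofMul ⟨ρ g h, mem_sphere_zero_iff_norm.2 (hρ.1 g h)⟩
  have hσ : IsAddCocycle σ := fun g h k => congrArg Additive.ofMul (Circle.ext (hρ.2 g h k))
  obtain ⟨f, hf⟩ := hσ.exists_eq_add_sub_of_symm fun g h =>
    congrArg Additive.ofMul (Circle.ext (hsymm g h))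
  refine ⟨fun g => (f g).toMul, fun g => Circle.norm_coe _, fun g h => ?_⟩
  have := congrArg (fun x : Additive Circle => (x.toMul : ℂ)) (hf g h)
  simp only [toMul_sub, toMul_add, Circle.coe_div, Circle.coe_mul] at this
  rw [← Complex.inv_eq_conj (Circle.norm_coe _), ← div_eq_mul_inv]
  exact this

theorem IsCocycle.cohomologous_iff (hψ : IsCocycle ψ) (hψ' : IsCocycle ψ') :
    Cohomologous ψ ψ' ↔ beta ψ = beta ψ' := by
  rw [hψ.beta_eq_beta_iff hψ']
  exact ⟨IsCoboundary.symm, (hψ.div hψ').isCoboundary_of_symm⟩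

end Cocycle

section Pairing
variable {G : Type*} [AddCommGroup G] {γ : G → G → ℂ}

lemma IsPairing.ne_zero (hγ : IsPairing γ) (g h : G) : γ g h ≠ 0 :=
  norm_ne_zero_iff.mp (by simp [hγ.1 g h])

lemma IsPairing.zero_left (hγ : IsPairing γ) (h : G) : γ 0 h = 1 :=
  (mul_eq_left₀ (hγ.ne_zero 0 h)).mp (by rw [← hγ.2.1, zero_add])

lemma IsPairing.flip (hγ : IsPairing γ) : IsPairing fun g h => γ h g :=
  ⟨fun g h => hγ.1 h g, fun g g' h => hγ.2.2 h g g', fun g h h' => hγ.2.1 h h' g⟩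

def IsPairing.addCharLeft (hγ : IsPairing γ) (h : G) : AddChar G ℂ where
  toFun g := γ g h
  map_zero_eq_one' := hγ.zero_left h
  map_add_eq_mul' g g' := hγ.2.1 g g' h

lemma IsPairing.zsmul_left (hγ : IsPairing γ) (k : ℤ) (g h : G) : γ (k • g) h = γ g h ^ k :=
  (hγ.addCharLeft h).map_zsmul_eq_zpow k g

lemma IsPairing.sum_left {ι : Type*} (hγ : IsPairing γ) (s : Finset ι) (x : ι → G) (h : G) :
    γ (∑ i ∈ s, x i) h = ∏ i ∈ s, γ (x i) h := by
  induction s using Finset.cons_induction with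
  | empty => exact hγ.zero_left h
  | cons i s hi ih => rw [Finset.sum_cons, Finset.prod_cons, hγ.2.1, ih]

lemma IsPairing.comp₂ {A : Type*} [AddCommGroup A] (hγ : IsPairing γ) (φ₁ φ₂ : A →+ G) :
    IsPairing fun a b => γ (φ₁ a) (φ₂ b) :=
  ⟨fun a b => hγ.1 _ _, fun a a' b => by simp only [map_add, hγ.2.1],
    fun a b b' => by simp only [map_add, hγ.2.2]⟩

lemma isPairing_one : IsPairing fun (_ _ : G) => (1 : ℂ) :=
  ⟨fun _ _ => norm_one, fun _ _ _ => (mul_one 1).symm, fun _ _ _ => (mul_one 1).symm⟩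

lemma IsPairing.prod {ι : Type*} {γ : ι → G → G → ℂ} (s : Finset ι)
    (hγ : ∀ i ∈ s, IsPairing (γ i)) : IsPairing fun g h => ∏ i ∈ s, γ i g h := by
  refine ⟨fun g h => ?_, fun g g' h => ?_, fun g h h' => ?_⟩
  · rw [norm_prod]
    exact Finset.prod_eq_one fun i hi => (hγ i hi).1 g h
  · rw [← Finset.prod_mul_distrib]
    exact Finset.prod_congr rfl fun i hi => (hγ i hi).2.1 g g' h
  · rw [← Finset.prod_mul_distrib]
    exact Finset.prod_congr rfl fun i hi => (hγ i hi).2.2 g h h'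

lemma IsPairing.isCocycle (hγ : IsPairing γ) : IsCocycle γ :=
  ⟨hγ.1, fun g h k => by rw [hγ.2.1, hγ.2.2]; ring⟩

lemma IsAlternatingPairing.comp {A : Type*} [AddCommGroup A] (hγ : IsAlternatingPairing γ)
    (φ : A →+ G) : IsAlternatingPairing fun a b => γ (φ a) (φ b) :=
  ⟨hγ.1.comp₂ φ φ, fun a => hγ.2 (φ a)⟩

lemma IsAlternatingPairing.mul_swap_eq_one (hγ : IsAlternatingPairing γ) (g h : G) :
    γ g h * γ h g = 1 := by
  have := hγ.2 (g + h)
  rwa [hγ.1.2.1, hγ.1.2.2, hγ.1.2.2, hγ.2, hγ.2, one_mul, mul_one] at this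

lemma IsAlternatingPairing.conj_eq (hγ : IsAlternatingPairing γ) (g h : G) :
    conj (γ g h) = γ h g := by
  rw [← Complex.inv_eq_conj (hγ.1.1 g h)]
  exact inv_eq_of_mul_eq_one_right (hγ.mul_swap_eq_one g h)

lemma IsAlternatingPairing.eq_one_of_isAddCyclic [IsAddCyclic G] (hγ : IsAlternatingPairing γ)
    (g h : G) : γ g h = 1 := by
  obtain ⟨x, hx⟩ := IsAddCyclic.exists_generator (α := G)
  obtain ⟨k, rfl⟩ := AddSubgroup.mem_zmultiples_iff.mp (hx g)
  obtain ⟨l, rfl⟩ := AddSubgroup.mem_zmultiples_iff.mp (hx h)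
  have hxl : γ x (l • x) = 1 := by
    rw [← hγ.conj_eq, hγ.1.zsmul_left, hγ.2, one_zpow, map_one]
  rw [hγ.1.zsmul_left, hxl, one_zpow]

end Pairing

section Pi
variable {ι : Type*} [Fintype ι] [LinearOrder ι] {M : ι → Type*} [∀ i, AddCommGroup (M i)]
  {γ : (∀ i, M i) → (∀ i, M i) → ℂ}

def triangularPart (γ : (∀ i, M i) → (∀ i, M i) → ℂ) (g h : ∀ i, M i) : ℂ :=
  ∏ i, ∏ j, if i < j then γ (Pi.single i (g i)) (Pi.single j (h j)) else 1

lemma IsPairing.eq_prod_single (hγ : IsPairing γ) (g h : ∀ i, M i) :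
    γ g h = ∏ i, ∏ j, γ (Pi.single i (g i)) (Pi.single j (h j)) := by
  conv_lhs => rw [← Finset.univ_sum_single g, ← Finset.univ_sum_single h]
  rw [hγ.sum_left]
  exact Finset.prod_congr rfl fun i _ => hγ.flip.sum_left _ _ _

lemma IsPairing.triangularPart (hγ : IsPairing γ) : IsPairing (triangularPart γ) := by
  refine IsPairing.prod _ fun i _ => IsPairing.prod _ fun j _ => ?_
  split_ifs
  · exact hγ.comp₂ ((AddMonoidHom.single M i).comp (Pi.evalAddMonoidHom M i))
      ((AddMonoidHom.single M j).comp (Pi.evalAddMonoidHom M j))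
  · exact isPairing_one

lemma IsAlternatingPairing.beta_triangularPart [∀ i, IsAddCyclic (M i)]
    (hγ : IsAlternatingPairing γ) : beta (triangularPart γ) = γ := by
  funext g h
  have hdiag (i : ι) : γ (Pi.single i (g i)) (Pi.single i (h i)) = 1 :=
    (hγ.comp (AddMonoidHom.single M i)).eq_one_of_isAddCyclic (g i) (h i)
  have hconj : conj (triangularPart γ h g) =
      ∏ i, ∏ j, if j < i then γ (Pi.single i (g i)) (Pi.single j (h j)) else 1 := by
    rw [triangularPart, map_prod, Finset.prod_comm]
    refine Finset.prod_congr rfl fun i _ => ?_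
    rw [map_prod]
    refine Finset.prod_congr rfl fun j _ => ?_
    rw [apply_ite conj, map_one, hγ.conj_eq]
  rw [beta, hconj, triangularPart, ← Finset.prod_mul_distrib, hγ.1.eq_prod_single]
  refine Finset.prod_congr rfl fun i _ => ?_
  rw [← Finset.prod_mul_distrib]
  refine Finset.prod_congr rfl fun j _ => ?_
  rcases lt_trichotomy i j with hij | rfl | hji
  · rw [if_pos hij, if_neg hij.asymm, mul_one]
  · rw [if_neg (lt_irrefl i), one_mul, hdiag]
  · rw [if_neg hji.asymm, if_pos hji, one_mul]

end Pi

theorem IsAlternatingPairing.exists_isCocycle_beta_eq {G : Type*} [AddCommGroup G] [Finite G]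
    {γ : G → G → ℂ} (hγ : IsAlternatingPairing γ) : ∃ ψ, IsCocycle ψ ∧ beta ψ = γ := by
  obtain ⟨ι, _, n, -, ⟨e⟩⟩ := AddCommGroup.equiv_directSum_zmod_of_finite' G
  let E := e.trans (DirectSum.addEquivProd _)
  let _ : LinearOrder ι := LinearOrder.lift' _ (Fintype.equivFin ι).injective
  have hγE := hγ.comp E.symm.toAddMonoidHom
  refine ⟨fun g h => triangularPart _ (E g) (E h),
    (hγE.1.triangularPart.comp₂ E.toAddMonoidHom E.toAddMonoidHom).isCocycle, ?_⟩
  funext g h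
  exact (congrFun₂ hγE.beta_triangularPart (E g) (E h)).trans (by simp)

/-- For a finite abelian group `G`: (i) `β^ψ` is an alternating pairing;
(ii) every alternating pairing arises as `β^ψ`; (iii) `β^ψ = β^{ψ'}` iff `ψ` and
`ψ'` are cohomologous.  Thus `[ψ] ↦ β^ψ` is an isomorphism from `H²(G;𝕋)` onto
the group of alternating pairings on `G`. -/
theorem stmt2 {G : Type*} [AddCommGroup G] [Fintype G] :
    (∀ ψ : G → G → ℂ, IsCocycle ψ → IsAlternatingPairing (beta ψ)) ∧
    (∀ γ : G → G → ℂ, IsAlternatingPairing γ →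
      ∃ ψ : G → G → ℂ, IsCocycle ψ ∧ beta ψ = γ) ∧
    (∀ ψ ψ' : G → G → ℂ, IsCocycle ψ → IsCocycle ψ' →
      (beta ψ = beta ψ' ↔ Cohomologous ψ ψ')) :=
  ⟨fun _ hψ => hψ.isAlternatingPairing_beta, fun _ hγ => hγ.exists_isCocycle_beta_eq,
    fun _ _ hψ hψ' => (hψ.cohomologous_iff hψ').symm⟩
end

section
/- Let G be a finite abelian group and ψ a 𝕋-valued 2-cocycle on G which is symmetric, i.e. ψ(g,h) = ψ(h,g) for all g,h ∈ G. Then ψ is a coboundary: there exists f : G → 𝕋 with ψ(g,h) = f(g)·f(h)·conj(f(g+h)) for all g,h ∈ G. -/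
/-!
A symmetric 2-cocycle `ψ` on `G` with values in an abelian group `A` makes `G × A`, with the
addition `(g, a) + (h, b) = (g + h, a + b + ψ g h)`, into an abelian group `E` containing `A`.
If `A` is divisible, it is an injective `ℤ`-module, so the inclusion `A → E` has a retraction
`r`, and `g ↦ r (g, 0)` is a cochain with coboundary `ψ`. The circle group is divisible, and
`arg ∘ ψ` is such a cocycle with values in `Real.Angle`.
-/

open ComplexConjugate

structure SymmAddCocycle (G A : Type*) [AddCommGroup G] [AddCommGroup A] where
  toFun : G → G → A
  cocycle : ∀ g h k, toFun g h + toFun (g + h) k = toFun h k + toFun g (h + k)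
  symm : ∀ g h, toFun g h = toFun h g

namespace SymmAddCocycle

variable {G A : Type*} [AddCommGroup G] [AddCommGroup A]

instance : CoeFun (SymmAddCocycle G A) fun _ ↦ G → G → A := ⟨toFun⟩

variable (ψ : SymmAddCocycle G A)

theorem apply_zero_left (g : G) : ψ 0 g = ψ 0 0 := by
  simpa using (ψ.cocycle 0 0 g).symm

@[ext]
structure Extension (_ : SymmAddCocycle G A) where
  base : G
  fiber : A

instance : Zero ψ.Extension := ⟨⟨0, -ψ 0 0⟩⟩

instance : Add ψ.Extension := ⟨fun x y ↦ ⟨x.base + y.base, x.fiber + y.fiber + ψ x.base y.base⟩⟩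

instance : Neg ψ.Extension := ⟨fun x ↦ ⟨-x.base, -x.fiber - ψ (-x.base) x.base - ψ 0 0⟩⟩

variable {ψ}

@[simp] theorem zero_base : (0 : ψ.Extension).base = 0 := rfl

@[simp] theorem zero_fiber : (0 : ψ.Extension).fiber = -ψ 0 0 := rfl

@[simp] theorem add_base (x y : ψ.Extension) : (x + y).base = x.base + y.base := rfl

@[simp] theorem add_fiber (x y : ψ.Extension) :
    (x + y).fiber = x.fiber + y.fiber + ψ x.base y.base := rfl

@[simp] theorem neg_base (x : ψ.Extension) : (-x).base = -x.base := rfl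

@[simp] theorem neg_fiber (x : ψ.Extension) :
    (-x).fiber = -x.fiber - ψ (-x.base) x.base - ψ 0 0 := rfl

variable (ψ)

instance : AddCommGroup ψ.Extension where
  nsmul := nsmulRec
  zsmul := zsmulRec
  add_assoc x y z := by
    ext
    · exact add_assoc _ _ _
    · simp only [add_fiber, add_base]
      linear_combination (norm := abel) ψ.cocycle x.base y.base z.base
  zero_add x := by
    ext
    · exact zero_add _
    · simp only [add_fiber, zero_fiber, zero_base, ψ.apply_zero_left x.base]
      abel
  add_zero x := by
    ext
    · exact add_zero _
    · simp only [add_fiber, zero_fiber, zero_base, ψ.symm x.base, ψ.apply_zero_left x.base]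
      abel
  neg_add_cancel x := by
    ext
    · exact neg_add_cancel _
    · simp only [add_fiber, neg_fiber, neg_base, zero_fiber]
      abel
  add_comm x y := by
    ext
    · exact add_comm _ _
    · simp only [add_fiber, ψ.symm x.base]
      abel

/-- The inclusion of `A` into the extension; the shift by `ψ 0 0` makes it additive. -/
def inr : A →+ ψ.Extension where
  toFun a := ⟨0, a - ψ 0 0⟩
  map_zero' := Extension.ext rfl (zero_sub _)
  map_add' a b := by
    ext
    · exact (add_zero 0).symm
    · simp only [add_fiber]
      abel

theorem inr_apply (a : A) : ψ.inr a = ⟨0, a - ψ 0 0⟩ := rfl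

theorem inr_injective : Function.Injective ψ.inr := fun _ _ hab ↦
  sub_left_injective (congrArg Extension.fiber hab)

theorem add_eq_add_inr (g h : G) :
    (⟨g, 0⟩ + ⟨h, 0⟩ : ψ.Extension) = ⟨g + h, 0⟩ + ψ.inr (ψ g h) := by
  ext
  · exact (add_zero _).symm
  · simp only [add_fiber, inr_apply, ψ.symm (g + h), ψ.apply_zero_left]
    abel

theorem exists_eq_coboundary [DivisibleBy A ℤ] :
    ∃ f : G → A, ∀ g h, ψ g h = f g + f h - f (g + h) := by
  obtain ⟨r, hr⟩ := (Module.Baer.of_divisible A).extension_property_addMonoidHom ψ.inr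
    ψ.inr_injective (AddMonoidHom.id A)
  refine ⟨fun g ↦ r ⟨g, 0⟩, fun g h ↦ ?_⟩
  have hψ : r (ψ.inr (ψ g h)) = ψ g h := DFunLike.congr_fun hr (ψ g h)
  rw [← map_add, ψ.add_eq_add_inr, map_add, hψ]
  abel

end SymmAddCocycle

open Real

noncomputable instance Real.Angle.instDivisibleByInt : DivisibleBy Angle ℤ :=
  haveI : Fact (0 < 2 * π) := ⟨two_pi_pos⟩
  inferInstanceAs (DivisibleBy (AddCircle (2 * π)) ℤ)

theorem Real.Angle.coe_toCircle_arg {z : ℂ} (hz : ‖z‖ = 1) :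
    ((Complex.arg z : Angle).toCircle : ℂ) = z := by
  rw [toCircle_coe]
  exact congrArg Subtype.val (Circle.exp_arg ⟨z, mem_sphere_zero_iff_norm.2 hz⟩)

theorem Real.Angle.toCircle_injective : Function.Injective toCircle :=
  Function.LeftInverse.injective (g := fun z : Circle ↦ (Complex.arg z : Angle)) arg_toCircle

theorem Real.Angle.coe_toCircle_sub (θ φ : Angle) :
    ((θ - φ).toCircle : ℂ) = θ.toCircle * conj (φ.toCircle : ℂ) := by
  rw [sub_eq_add_neg, toCircle_add, toCircle_neg, Circle.coe_mul, Circle.coe_inv_eq_conj]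

noncomputable def IsCocycle.argCocycle {G : Type*} [AddCommGroup G] {ψ : G → G → ℂ}
    (hψ : IsCocycle ψ) (hsym : ∀ g h, ψ g h = ψ h g) : SymmAddCocycle G Angle where
  toFun g h := Complex.arg (ψ g h)
  cocycle g h k := Angle.toCircle_injective <| Circle.coe_injective <| by
    simp only [Angle.toCircle_add, Circle.coe_mul, Angle.coe_toCircle_arg (hψ.1 _ _), hψ.2]
  symm g h := by rw [hsym]

theorem IsCocycle.coe_toCircle_argCocycle {G : Type*} [AddCommGroup G] {ψ : G → G → ℂ}
    (hψ : IsCocycle ψ) (hsym : ∀ g h, ψ g h = ψ h g) (g h : G) :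
    ((hψ.argCocycle hsym g h).toCircle : ℂ) = ψ g h :=
  Angle.coe_toCircle_arg (hψ.1 g h)

theorem stmt4_general {G : Type*} [AddCommGroup G] (ψ : G → G → ℂ)
    (hψ : IsCocycle ψ) (hsym : ∀ g h : G, ψ g h = ψ h g) :
    ∃ f : G → ℂ, (∀ g, ‖f g‖ = 1) ∧
      ∀ g h : G, ψ g h = f g * f h * conj (f (g + h)) := by
  obtain ⟨φ, hφ⟩ := (hψ.argCocycle hsym).exists_eq_coboundary
  refine ⟨fun g ↦ (φ g).toCircle, fun g ↦ Circle.norm_coe _, fun g h ↦ ?_⟩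
  rw [← hψ.coe_toCircle_argCocycle hsym, hφ, Angle.coe_toCircle_sub, Angle.toCircle_add,
    Circle.coe_mul]

/-- Every symmetric 2-cocycle on a finite abelian group is a coboundary. -/
theorem stmt4 {G : Type*} [AddCommGroup G] [Fintype G] (ψ : G → G → ℂ)
    (hψ : IsCocycle ψ) (hsym : ∀ g h : G, ψ g h = ψ h g) :
    ∃ f : G → ℂ, (∀ g, ‖f g‖ = 1) ∧
      ∀ g h : G, ψ g h = f g * f h * conj (f (g + h)) :=
  stmt4_general ψ hψ hsym
end

section
/- Let G be a finite abelian group and ⟨·,·⟩ a non-degenerate symmetric pairing on G. Then: (i) there exists at least one quadratic form on G realizing ⟨·,·⟩; (ii) if q is one such quadratic form, then the set of all quadratic forms realizing ⟨·,·⟩ is exactly {ψ·q : ψ ∈ Hom(G,𝕋) with ψ² = 1}; (iii) consequently, the number of quadratic forms realizing ⟨·,·⟩ equals the number of elements g ∈ G with 2g = 0 (i.e. the order of the largest elementary 2-subgroup of G). -/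
/-! Realizability of symmetric pairings is preserved by isomorphisms and by products (multiply
the forms on the two factors and divide by the pairing between them), and holds on `ZMod n`:
if `u ^ 2 = γ(1,1)⁻¹`, then `k ↦ u ^ (k (k + n))` on `ℤ` is `n`-periodic and realizes `γ`.
The structure theorem then realizes every symmetric pairing on a finite abelian group.
Two forms realizing the same pairing differ by an even character, i.e. one with `ψ² = 1`.
By non-degeneracy and `|Hom(G, 𝕋)| = |G|`, `g ↦ γ(g, ·)` is a bijection from `G` onto its
characters, which matches the characters with `ψ² = 1` with the elements with `2g = 0`. -/

open ComplexConjugate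

/-- A non-degenerate symmetric pairing. -/
def IsNondegSymmPairing {G : Type*} [AddCommGroup G] (γ : G → G → ℂ) : Prop :=
  IsPairing γ ∧ (∀ g h, γ g h = γ h g) ∧ ∀ g, (∀ h, γ g h = 1) → g = 0

/-- `q` is a quadratic form realizing the pairing `γ`:  `q` is `𝕋`-valued,
`q(-g) = q(g)`, and `γ(g,h) = q(g)·q(h)·conj(q(g+h))`. -/
def Realizes {G : Type*} [AddCommGroup G] (q : G → ℂ) (γ : G → G → ℂ) : Prop :=
  (∀ g, ‖q g‖ = 1) ∧ (∀ g, q (-g) = q g) ∧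
    ∀ g h, γ g h = q g * q h * conj (q (g + h))

/-- A `𝕋`-valued character of `G`. -/
def IsChar {G : Type*} [AddCommGroup G] (ψ : G → ℂ) : Prop :=
  (∀ g, ‖ψ g‖ = 1) ∧ ∀ g h, ψ (g + h) = ψ g * ψ h

lemma ne_zero_of_norm_eq_one {z : ℂ} (h : ‖z‖ = 1) : z ≠ 0 := by
  rintro rfl
  simp at h

section

variable {G H : Type*} [AddCommGroup G] [AddCommGroup H]

lemma IsChar.map_zero {ψ : G → ℂ} (hψ : IsChar ψ) : ψ 0 = 1 := by
  have h := hψ.2 0 0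
  rw [add_zero] at h
  exact (mul_eq_left₀ (ne_zero_of_norm_eq_one (hψ.1 0))).1 h.symm

def IsChar.toAddChar {ψ : G → ℂ} (hψ : IsChar ψ) : AddChar G ℂ where
  toFun := ψ
  map_zero_eq_one' := hψ.map_zero
  map_add_eq_mul' := hψ.2

lemma IsChar.map_neg_of_sq_eq_one {ψ : G → ℂ} (hψ : IsChar ψ) (hsq : ∀ g, ψ g ^ 2 = 1)
    (g : G) : ψ (-g) = ψ g := by
  have hinv : ψ g * ψ g = 1 := (sq (ψ g)).symm.trans (hsq g)
  exact (hψ.toAddChar.map_neg_eq_inv g).trans (inv_eq_of_mul_eq_one_right hinv)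

lemma IsChar.sq_eq_one_of_map_neg {ψ : G → ℂ} (hψ : IsChar ψ) (hneg : ∀ g, ψ (-g) = ψ g)
    (g : G) : ψ g ^ 2 = 1 :=
  calc ψ g ^ 2 = ψ g * ψ (-g) := by rw [sq, hneg]
    _ = 1 := by rw [← hψ.2, add_neg_cancel, hψ.map_zero]

namespace IsPairing

variable {γ : G → G → ℂ}

lemma isChar_left (hγ : IsPairing γ) (h : G) : IsChar (γ · h) :=
  ⟨fun g => hγ.1 g h, fun g g' => hγ.2.1 g g' h⟩

lemma isChar_right (hγ : IsPairing γ) (g : G) : IsChar (γ g) :=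
  ⟨hγ.1 g, hγ.2.2 g⟩

lemma comp (hγ : IsPairing γ) (f : H →+ G) : IsPairing (fun a b => γ (f a) (f b)) :=
  ⟨fun _ _ => hγ.1 _ _, fun _ _ _ => by simp only [map_add, hγ.2.1],
    fun _ _ _ => by simp only [map_add, hγ.2.2]⟩

lemma zsmul_zsmul (hγ : IsPairing γ) (a b : ℤ) (g h : G) :
    γ (a • g) (b • h) = γ g h ^ (a * b) := by
  have hleft : γ (a • g) (b • h) = γ g (b • h) ^ a :=
    (hγ.isChar_left (b • h)).toAddChar.map_zsmul_eq_zpow a g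
  have hright : γ g (b • h) = γ g h ^ b :=
    (hγ.isChar_right g).toAddChar.map_zsmul_eq_zpow b h
  rw [hleft, hright, mul_comm, zpow_mul]

lemma add_add (hγ : IsPairing γ) (a b c d : G) :
    γ (a + b) (c + d) = γ a c * γ a d * (γ b c * γ b d) := by
  rw [hγ.2.1, hγ.2.2, hγ.2.2]

end IsPairing

namespace Realizes

variable {q : G → ℂ} {γ : G → G → ℂ}

lemma comp (hq : Realizes q γ) (f : H →+ G) :
    Realizes (q ∘ f) (fun a b => γ (f a) (f b)) :=
  ⟨fun _ => hq.1 _, fun _ => by simp only [Function.comp, map_neg, hq.2.1],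
    fun _ _ => by simp only [Function.comp, map_add, hq.2.2]⟩

end Realizes

lemma realizes_iff_mul {q : G → ℂ} {γ : G → G → ℂ} :
    Realizes q γ ↔ (∀ g, ‖q g‖ = 1) ∧ (∀ g, q (-g) = q g) ∧
      ∀ g h, γ g h * q (g + h) = q g * q h := by
  refine and_congr_right fun hnorm => and_congr_right fun _ => forall₂_congr fun g h => ?_
  rw [← Complex.inv_eq_conj (hnorm _),
    eq_mul_inv_iff_mul_eq₀ (ne_zero_of_norm_eq_one (hnorm _))]

lemma Realizes.mul_map_add {q : G → ℂ} {γ : G → G → ℂ} (hq : Realizes q γ) (g h : G) :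
    γ g h * q (g + h) = q g * q h :=
  (realizes_iff_mul.1 hq).2.2 g h

def SymmPairingsRealizable (G : Type*) [AddCommGroup G] : Prop :=
  ∀ γ : G → G → ℂ, IsPairing γ → (∀ g h, γ g h = γ h g) → ∃ q, Realizes q γ

lemma SymmPairingsRealizable.of_addEquiv (e : G ≃+ H) (hH : SymmPairingsRealizable H) :
    SymmPairingsRealizable G := by
  intro γ hγ hsymm
  obtain ⟨q, hq⟩ := hH _ (hγ.comp e.symm.toAddMonoidHom) fun _ _ => hsymm _ _
  exact ⟨_, by simpa using hq.comp e.toAddMonoidHom⟩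

lemma symmPairingsRealizable_of_subsingleton [Subsingleton G] : SymmPairingsRealizable G := by
  intro γ hγ _
  refine ⟨1, realizes_iff_mul.2 ⟨fun _ => by simp, fun _ => rfl, fun g h => ?_⟩⟩
  rw [Subsingleton.elim g 0, Subsingleton.elim h 0, (hγ.isChar_left 0).map_zero]
  simp

lemma SymmPairingsRealizable.prod (hG : SymmPairingsRealizable G)
    (hH : SymmPairingsRealizable H) : SymmPairingsRealizable (G × H) := by
  intro γ hγ hsymm
  obtain ⟨qG, hqG⟩ := hG _ (hγ.comp (AddMonoidHom.inl G H)) fun _ _ => hsymm _ _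
  obtain ⟨qH, hqH⟩ := hH _ (hγ.comp (AddMonoidHom.inr G H)) fun _ _ => hsymm _ _
  have hsplit : ∀ (g : G) (h : H), (g, h) = (g, 0) + (0, h) := by simp
  refine ⟨fun p => qG p.1 * qH p.2 * (γ (p.1, 0) (0, p.2))⁻¹,
    realizes_iff_mul.2 ⟨fun p => by simp [hqG.1, hqH.1, hγ.1], ?_, ?_⟩⟩
  · rintro ⟨g, h⟩
    have hneg : γ (-g, 0) (0, -h) = γ (g, 0) (0, h) := by
      simpa using hγ.zsmul_zsmul (-1) (-1) (g, 0) (0, h)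
    simp only [Prod.fst_neg, Prod.snd_neg, hqG.2.1, hqH.2.1, hneg]
  · rintro ⟨g, h⟩ ⟨g', h'⟩
    have hG' := hqG.mul_map_add g g'
    have hH' := hqH.mul_map_add h h'
    simp only [AddMonoidHom.inl_apply, AddMonoidHom.inr_apply] at hG' hH'
    have hcross : γ (g + g', 0) (0, h + h') =
        γ (g, 0) (0, h) * γ (g, 0) (0, h') * (γ (g', 0) (0, h) * γ (g', 0) (0, h')) := by
      rw [← hγ.add_add, Prod.mk_add_mk, Prod.mk_add_mk, add_zero, add_zero]
    have hne : ∀ a b, γ a b ≠ 0 := fun a b => ne_zero_of_norm_eq_one (hγ.1 a b)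
    simp only [Prod.mk_add_mk]
    rw [hsplit g h, hsplit g' h', hγ.add_add, hsymm (0, h), hcross]
    field_simp [hne]
    linear_combination γ (0, h) (0, h') * qH (h + h') * hG' + qG g * qG g' * hH'

end

lemma exists_realizes_zmod (n : ℕ) {γ : ZMod n → ZMod n → ℂ} (hγ : IsPairing γ) :
    ∃ q, Realizes q γ := by
  obtain ⟨u, hu⟩ : ∃ u : ℂ, u ^ 2 = (γ 1 1)⁻¹ := IsAlgClosed.exists_pow_nat_eq _ two_pos
  have hu_norm : ‖u‖ = 1 := by
    rw [← pow_eq_one_iff_of_nonneg (norm_nonneg u) two_ne_zero, ← norm_pow, hu, norm_inv,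
      hγ.1, inv_one]
  have hu0 : u ≠ 0 := ne_zero_of_norm_eq_one hu_norm
  have hγ_int : ∀ a b : ℤ, γ a b = u ^ (-2 * (a * b)) := by
    have hc : γ 1 1 = u ^ (-2 : ℤ) := by rw [zpow_neg, zpow_ofNat, hu, inv_inv]
    intro a b
    rw [← zsmul_one a, ← zsmul_one b, hγ.zsmul_zsmul, hc, ← zpow_mul]
  have hu_pow : u ^ (-2 * (n : ℤ)) = 1 := by
    simpa [ZMod.natCast_self, (hγ.isChar_left 1).map_zero] using (hγ_int n 1).symm
  set Q : ℤ → ℂ := fun k => u ^ (k * (k + n))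
  have hQ : Function.Periodic Q n := fun k => by
    have hexp : (k + n) * (k + n + n) = k * (k + n) + -2 * n * -(k + n) := by ring
    simp only [Q]
    rw [hexp, zpow_add₀ hu0, zpow_mul u (-2 * n), hu_pow, one_zpow, mul_one]
  have hQ_cast : ∀ k : ℤ, Q (k : ZMod n).cast = Q k := by
    intro k
    obtain ⟨m, hm⟩ := (ZMod.intCast_eq_intCast_iff_dvd_sub _ _ n).1
      (ZMod.intCast_zmod_cast (k : ZMod n))
    calc Q (k : ZMod n).cast = Q ((k : ZMod n).cast + m * n) := (hQ.int_mul m _).symm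
      _ = Q k := by congr 1; linarith
  refine ⟨fun x => Q x.cast, realizes_iff_mul.2 ⟨fun x => by simp [Q, hu_norm], ?_, ?_⟩⟩
  · intro x
    obtain ⟨k, rfl⟩ := ZMod.intCast_surjective x
    rw [← Int.cast_neg, hQ_cast, hQ_cast, ← hQ.sub_eq]
    simp only [Q]
    ring_nf
  · intro x y
    obtain ⟨a, rfl⟩ := ZMod.intCast_surjective x
    obtain ⟨b, rfl⟩ := ZMod.intCast_surjective y
    simp only [← Int.cast_add, hQ_cast, hγ_int, Q, ← zpow_add₀ hu0]
    ring_nf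

lemma symmPairingsRealizable_zmod (n : ℕ) : SymmPairingsRealizable (ZMod n) :=
  fun _ hγ _ => exists_realizes_zmod n hγ

lemma symmPairingsRealizable_pi {ι : Type*} [Fintype ι] (n : ι → ℕ) :
    SymmPairingsRealizable (∀ i, ZMod (n i)) := by
  refine Fintype.induction_empty_option
    (P := fun ι _ => ∀ n : ι → ℕ, SymmPairingsRealizable (∀ i, ZMod (n i))) ?_ ?_ ?_ ι n
  · intro α β _ e ih n
    exact (ih (n ∘ e)).of_addEquiv
      (LinearEquiv.piCongrLeft ℤ (fun b => ZMod (n b)) e).toAddEquiv.symm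
  · exact fun _ => symmPairingsRealizable_of_subsingleton
  · intro α _ ih n
    exact ((symmPairingsRealizable_zmod _).prod (ih _)).of_addEquiv
      (LinearEquiv.piOptionEquivProd ℤ).toAddEquiv

lemma symmPairingsRealizable_of_finite (G : Type*) [AddCommGroup G] [Finite G] :
    SymmPairingsRealizable G := by
  obtain ⟨ι, _, n, -, ⟨e⟩⟩ := AddCommGroup.equiv_directSum_zmod_of_finite' G
  exact (symmPairingsRealizable_pi n).of_addEquiv (e.trans (DirectSum.addEquivProd _))

section

variable {G : Type*} [AddCommGroup G] {γ : G → G → ℂ}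

theorem Realizes.realizes_iff_exists_isChar {q : G → ℂ} (hq : Realizes q γ) (q' : G → ℂ) :
    Realizes q' γ ↔
      ∃ ψ : G → ℂ, IsChar ψ ∧ (∀ g, ψ g ^ 2 = 1) ∧ q' = fun g => ψ g * q g := by
  have hq0 : ∀ g, q g ≠ 0 := fun g => ne_zero_of_norm_eq_one (hq.1 g)
  constructor
  · intro hq'
    have hψ : IsChar (fun g => q' g / q g) := by
      refine ⟨fun g => by rw [norm_div, hq.1, hq'.1, div_one], fun g h => ?_⟩
      have hγ0 : γ g h ≠ 0 :=
        left_ne_zero_of_mul (hq.mul_map_add g h ▸ mul_ne_zero (hq0 g) (hq0 h))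
      change q' (g + h) / q (g + h) = q' g / q g * (q' h / q h)
      rw [div_mul_div_comm, div_eq_div_iff (hq0 _) (mul_ne_zero (hq0 g) (hq0 h)),
        ← mul_right_inj' hγ0]
      linear_combination
        q g * q h * hq'.mul_map_add g h - q' g * q' h * hq.mul_map_add g h
    refine ⟨_, hψ, hψ.sq_eq_one_of_map_neg fun g => ?_,
      funext fun g => (div_mul_cancel₀ _ (hq0 g)).symm⟩
    rw [hq.2.1, hq'.2.1]
  · rintro ⟨ψ, hψ, hsq, rfl⟩
    refine realizes_iff_mul.2 ⟨fun g => by rw [norm_mul, hψ.1, hq.1, one_mul], fun g => ?_,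
      fun g h => ?_⟩
    · rw [hψ.map_neg_of_sq_eq_one hsq, hq.2.1]
    · rw [hψ.2]
      linear_combination ψ g * ψ h * hq.mul_map_add g h

namespace IsNondegSymmPairing

lemma injective (hγ : IsNondegSymmPairing γ) : Function.Injective γ := by
  intro g g' hgg'
  refine sub_eq_zero.1 (hγ.2.2 _ fun h => ?_)
  have hneg : γ (-g') h = (γ g' h)⁻¹ := (hγ.1.isChar_left h).toAddChar.map_neg_eq_inv g'
  rw [sub_eq_add_neg, hγ.1.2.1, hneg, congrFun hgg' h,
    mul_inv_cancel₀ (ne_zero_of_norm_eq_one (hγ.1.1 g' h))]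

lemma exists_eq_of_isChar [Fintype G] (hγ : IsNondegSymmPairing γ) {ψ : G → ℂ}
    (hψ : IsChar ψ) : ∃ g, γ g = ψ := by
  let Φ : G → AddChar G ℂ := fun g => (hγ.1.isChar_right g).toAddChar
  have hΦ : Function.Injective Φ := fun g g' h => hγ.injective (congrArg DFunLike.coe h)
  have hΦ_bij : Function.Bijective Φ :=
    (Fintype.bijective_iff_injective_and_card Φ).2 ⟨hΦ, AddChar.card_eq.symm⟩
  obtain ⟨g, hg⟩ := hΦ_bij.2 hψ.toAddChar
  exact ⟨g, congrArg DFunLike.coe hg⟩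

theorem card_realizes [Fintype G] (hγ : IsNondegSymmPairing γ) {q : G → ℂ}
    (hq : Realizes q γ) :
    Nat.card {q' : G → ℂ // Realizes q' γ} = Nat.card {g : G // g + g = 0} := by
  set S := {ψ : G → ℂ | IsChar ψ ∧ ∀ g, ψ g ^ 2 = 1}
  have hforms : {q' | Realizes q' γ} = (fun ψ g => ψ g * q g) '' S := by
    ext q'
    simp only [Set.mem_ofPred_eq, Set.mem_image, hq.realizes_iff_exists_isChar, S]
    exact exists_congr fun ψ => by rw [and_assoc, eq_comm]
  have hchars : S = γ '' {g | g + g = 0} := by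
    ext ψ
    constructor
    · rintro ⟨hψ, hsq⟩
      obtain ⟨g, rfl⟩ := hγ.exists_eq_of_isChar hψ
      refine ⟨g, hγ.2.2 _ fun h => ?_, rfl⟩
      rw [hγ.1.2.1, ← sq, hsq]
    · rintro ⟨g, hg, rfl⟩
      refine ⟨hγ.1.isChar_right g, fun h => ?_⟩
      rw [sq, ← hγ.1.2.1, show g + g = 0 from hg, (hγ.1.isChar_left h).map_zero]
  have hmul_q : Function.Injective fun (ψ : G → ℂ) g => ψ g * q g := fun ψ ψ' h =>
    funext fun g => mul_right_cancel₀ (ne_zero_of_norm_eq_one (hq.1 g)) (congrFun h g)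
  calc Nat.card {q' : G → ℂ // Realizes q' γ}
      = Nat.card ((fun ψ g => ψ g * q g) '' S) := by rw [← hforms]; rfl
    _ = Nat.card (γ '' {g | g + g = 0}) := by rw [Nat.card_image_of_injective hmul_q, hchars]
    _ = Nat.card {g : G // g + g = 0} := Nat.card_image_of_injective hγ.injective _

end IsNondegSymmPairing

end

/-- Lemma 4(a).  For a non-degenerate symmetric pairing `⟨·,·⟩` on a finite
abelian group `G`: (i) some quadratic form realizes it; (ii) if `q` realizes it,
the realizing quadratic forms are exactly `ψ·q` for characters `ψ` with `ψ² = 1`;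
(iii) their number is the number of `g ∈ G` with `2g = 0`. -/
theorem stmt10 {G : Type*} [AddCommGroup G] [Fintype G]
    (γ : G → G → ℂ) (hγ : IsNondegSymmPairing γ) :
    (∃ q : G → ℂ, Realizes q γ) ∧
    (∀ q : G → ℂ, Realizes q γ →
      ∀ q' : G → ℂ, (Realizes q' γ ↔
        ∃ ψ : G → ℂ, IsChar ψ ∧ (∀ g, ψ g ^ 2 = 1) ∧ q' = fun g => ψ g * q g)) ∧
    Nat.card {q : G → ℂ // Realizes q γ} = Nat.card {g : G // g + g = 0} := by
  obtain ⟨q, hq⟩ := symmPairingsRealizable_of_finite G γ hγ.1 hγ.2.1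
  exact ⟨⟨q, hq⟩, fun _ hq' => hq'.realizes_iff_exists_isChar, hγ.card_realizes hq⟩
end
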